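/- In the group ℤ^ω (countable direct power of ℤ with pointwise order), the sequence whose i-th term is the element equal to 0 in the first i coordinates and 1 in all later coordinates is a strictly decreasing sequence of positive (nonzero, nonnegative) elements; yet every strongly decreasing sequence in ℤ^ω is trivial. -/

import Mathlib

/-!
An integer sequence `a` with `n • a (i+1) ≥ a i ≥ 2 • a (i+1)`, `n > 2`, has nonnegative terms
from index `1` on, and `a (i+1) = 0` forces `a i = 0`. Since `a (i+1) ≤ a i / 2`, every tail
reaches `0` after finitely many halvings, and zeros then propagate backwards to every index.
Applying this in each coordinate kills every strongly decreasing sequence of `ℤ^ω`, whereas the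
tail indicators `𝟙[i, ∞)` form a strictly decreasing sequence of positive elements.
-/

section TailIndicator

variable {α : Type*} [Zero α] [One α]

def tailIndicator (i : ℕ) : ℕ → α := fun n => if n < i then 0 else 1

theorem tailIndicator_nonneg [Preorder α] [ZeroLEOneClass α] (i : ℕ) :
    0 ≤ (tailIndicator i : ℕ → α) := by
  intro n
  unfold tailIndicator
  split_ifs <;> simp

theorem tailIndicator_ne_zero [NeZero (1 : α)] (i : ℕ) : (tailIndicator i : ℕ → α) ≠ 0 :=
  fun h => by simpa [tailIndicator] using congrFun h i

theorem tailIndicator_succ_lt [PartialOrder α] [ZeroLEOneClass α] [NeZero (1 : α)] (i : ℕ) :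
    (tailIndicator (i + 1) : ℕ → α) < tailIndicator i := by
  refine Pi.lt_def.mpr ⟨fun n => ?_, i, by simp [tailIndicator]⟩
  unfold tailIndicator
  split_ifs <;> first | omega | simp

end TailIndicator

def StronglyDecreasing {α : Type*} [AddMonoid α] [Preorder α] (x : ℕ → α) : Prop :=
  ∀ i, ∃ n : ℕ, 4 ≤ n ∧ x i ≤ n • x (i + 1) ∧ 2 • x (i + 1) ≤ x i

namespace StronglyDecreasing

theorem apply {ι : Type*} {α : ι → Type*} [∀ k, AddMonoid (α k)] [∀ k, Preorder (α k)]
    {x : ℕ → ∀ k, α k} (hx : StronglyDecreasing x) (k : ι) :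
    StronglyDecreasing fun i => x i k := fun i => by
  obtain ⟨n, hn, hle, hge⟩ := hx i
  exact ⟨n, hn, hle k, hge k⟩

theorem eq_zero_of_succ_eq_zero {α : Type*} [AddMonoid α] [PartialOrder α] {x : ℕ → α}
    (hx : StronglyDecreasing x) {i : ℕ} (h : x (i + 1) = 0) : x i = 0 := by
  obtain ⟨n, -, hle, hge⟩ := hx i
  rw [h, smul_zero] at hle hge
  exact le_antisymm hle hge

variable {a : ℕ → ℤ}

theorem nonneg_succ (ha : StronglyDecreasing a) (i : ℕ) : 0 ≤ a (i + 1) := by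
  obtain ⟨n, hn, hle, hge⟩ := ha i
  simp only [nsmul_eq_mul, Nat.cast_ofNat] at hle hge
  have hn' : (4 : ℤ) ≤ n := by exact_mod_cast hn
  nlinarith

theorem exists_ge_eq_zero (ha : StronglyDecreasing a) (i : ℕ) :
    ∃ j, i ≤ j ∧ a j = 0 := by
  suffices h : ∀ m : ℕ, ∀ i, a (i + 1) ≤ m → ∃ j, i ≤ j ∧ a j = 0 from h _ i (Int.self_le_toNat _)
  intro m
  induction m with
  | zero => exact fun i hi => ⟨i + 1, by omega, le_antisymm hi (ha.nonneg_succ i)⟩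
  | succ m ih =>
    intro i hi
    obtain ⟨n, -, -, hge⟩ := ha (i + 1)
    have hpos := ha.nonneg_succ (i + 1)
    rw [two_nsmul] at hge
    rcases eq_or_lt_of_le hpos with hzero | hpos
    · exact ⟨i + 2, by omega, hzero.symm⟩
    · have hle : a (i + 1 + 1) ≤ m := by push_cast at hi; omega
      obtain ⟨j, hij, hj⟩ := ih (i + 1) hle
      exact ⟨j, by omega, hj⟩

theorem eq_zero (ha : StronglyDecreasing a) : a = 0 := by
  funext i
  obtain ⟨j, hij, hj⟩ := ha.exists_ge_eq_zero i
  induction hij using Nat.decreasingInduction with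
  | self => exact hj
  | of_succ k _ ih => exact ha.eq_zero_of_succ_eq_zero ih

end StronglyDecreasing

theorem zomega_strict_but_no_strongly_decreasing :
    (∀ i : ℕ,
      0 ≤ (fun n => if n < i then (0 : ℤ) else 1) ∧
      (fun n => if n < i then (0 : ℤ) else 1) ≠ 0 ∧
      (fun n => if n < i + 1 then (0 : ℤ) else 1) <
        (fun n => if n < i then (0 : ℤ) else 1)) ∧
    (∀ x : ℕ → (ℕ → ℤ),
      (∀ i, ∃ n : ℕ, 4 ≤ n ∧ x i ≤ n • x (i + 1) ∧ 2 • x (i + 1) ≤ x i) →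
      ∀ i, x i = 0) := by
  refine ⟨fun i => ⟨tailIndicator_nonneg i, tailIndicator_ne_zero i, tailIndicator_succ_lt i⟩,
    fun x hx i => ?_⟩
  funext k
  exact congrFun (StronglyDecreasing.eq_zero (StronglyDecreasing.apply (x := x) hx k)) i
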